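/- Fix σ_a ∈ ℝ with 0 < σ_a² < 1 and let f(x) = (√(1−x²) + (π − arccos x)·x)/π. Then for every t ∈ [−1,1], the map F_t(x) = σ_a²·f(x) + (1−σ_a²)·t maps [−1,1] into [−1,1] and is a contraction with Lipschitz constant at most σ_a² < 1; consequently there exists a unique x ∈ [−1,1] with x = σ_a²·f(x) + (1−σ_a²)·t. -/

import Mathlib

/- On `(-1, 1)` the derivative of `fDual` is `1 - arccos x / π ∈ [0, 1]`, so both `fDual` and
`x ↦ x - fDual x` are monotone on `[-1, 1]`. Hence `fDual` is `1`-Lipschitz there and, as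
`fDual (-1) = 0` and `fDual 1 = 1`, takes values in `[0, 1]`. The map
`x ↦ σₐ² fDual x + (1 - σₐ²) t` is then a convex combination of points of `[-1, 1]` and a
`σₐ²`-contraction of the complete set `[-1, 1]`, so Banach's theorem gives the fixed point. -/

open Real Set Function
open scoped NNReal

/-- The dual kernel of the normalized ReLU activation `φ(x) = √2·max(x,0)`. -/
noncomputable def fDual (x : ℝ) : ℝ :=
  (Real.sqrt (1 - x ^ 2) + (Real.pi - Real.arccos x) * x) / Real.pi

theorem LipschitzOnWith.existsUnique_isFixedPt {α : Type*} [MetricSpace α] {f : α → α}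
    {s : Set α} {K : ℝ≥0} (hK : K < 1) (hsc : IsComplete s) (hs : s.Nonempty)
    (hsf : MapsTo f s s) (hf : LipschitzOnWith K f s) : ∃! x, x ∈ s ∧ IsFixedPt f x := by
  have hcontr : ContractingWith K (hsf.restrict f s s) :=
    ⟨hK, (hsf.lipschitzOnWith_iff_restrict).1 hf⟩
  obtain ⟨x₀, hx₀⟩ := hs
  obtain ⟨x, hxs, hx, -⟩ := hcontr.exists_fixedPoint' hsc hsf hx₀ (edist_ne_top _ _)
  refine ⟨x, ⟨hxs, hx⟩, fun y ⟨hys, hy⟩ => ?_⟩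
  have := hsc.completeSpace_coe
  exact congrArg Subtype.val <| hcontr.fixedPoint_unique' (x := ⟨y, hys⟩) (y := ⟨x, hxs⟩)
    (Subtype.ext hy) (Subtype.ext hx)

theorem LipschitzOnWith.const_mul_add_const {α : Type*} [PseudoMetricSpace α] {g : α → ℝ}
    {s : Set α} {K : ℝ≥0} (hg : LipschitzOnWith K g s) {a : ℝ} (ha : 0 ≤ a) (c : ℝ) :
    LipschitzOnWith (a.toNNReal * K) (fun x => a * g x + c) s := by
  have haff : LipschitzWith a.toNNReal (fun y : ℝ => a * y + c) :=
    LipschitzWith.of_dist_le_mul fun y z => by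
      rw [Real.dist_eq, Real.dist_eq, Real.coe_toNNReal _ ha, add_sub_add_right_eq_sub,
        ← mul_sub, abs_mul, abs_of_nonneg ha]
  exact haff.comp_lipschitzOnWith hg

theorem lipschitzOnWith_one_of_monotoneOn_of_monotoneOn_sub {f : ℝ → ℝ} {s : Set ℝ}
    (hf : MonotoneOn f s) (hsub : MonotoneOn (fun x => x - f x) s) :
    LipschitzOnWith 1 f s := by
  refine LipschitzOnWith.of_le_add fun x hx y hy => ?_
  rw [Real.dist_eq]
  rcases le_total x y with hxy | hyx
  · linarith [hf hx hy hxy, abs_nonneg (x - y)]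
  · linarith [hsub hy hx hyx, le_abs_self (x - y)]

theorem continuous_fDual : Continuous fDual := by
  unfold fDual
  fun_prop

theorem hasDerivAt_fDual {x : ℝ} (hx : x ∈ Ioo (-1 : ℝ) 1) :
    HasDerivAt fDual (1 - arccos x / π) x := by
  have hpos : 0 < 1 - x ^ 2 := by nlinarith [hx.1, hx.2]
  have hsqrt : HasDerivAt (fun y => √(1 - y ^ 2)) (-x / √(1 - x ^ 2)) x := by
    convert ((hasDerivAt_pow 2 x).const_sub 1).sqrt hpos.ne' using 1
    field_simp
    ring
  have harccos := hasDerivAt_arccos hx.1.ne' hx.2.ne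
  refine ((hsqrt.add ((harccos.const_sub π).mul (hasDerivAt_id' x))).div_const π).congr_deriv ?_
  have hsqrt_ne : √(1 - x ^ 2) ≠ 0 := (sqrt_pos.2 hpos).ne'
  field_simp
  ring

theorem monotoneOn_fDual : MonotoneOn fDual (Icc (-1) 1) := by
  refine monotoneOn_of_hasDerivWithinAt_nonneg (convex_Icc _ _) continuous_fDual.continuousOn
    (fun x hx => ?_) fun x _ => sub_nonneg.2 (div_le_one_of_le₀ (arccos_le_pi x) pi_pos.le)
  rw [interior_Icc] at hx
  exact (hasDerivAt_fDual hx).hasDerivWithinAt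

theorem monotoneOn_id_sub_fDual : MonotoneOn (fun x => x - fDual x) (Icc (-1) 1) := by
  refine monotoneOn_of_hasDerivWithinAt_nonneg (f' := fun x => arccos x / π) (convex_Icc _ _)
    (continuous_id.sub continuous_fDual).continuousOn (fun x hx => ?_)
    fun x _ => div_nonneg (arccos_nonneg x) pi_pos.le
  rw [interior_Icc] at hx ⊢
  exact ((hasDerivAt_id' x).sub (hasDerivAt_fDual hx)).hasDerivWithinAt.congr_deriv (by ring)

theorem lipschitzOnWith_fDual : LipschitzOnWith 1 fDual (Icc (-1) 1) :=
  lipschitzOnWith_one_of_monotoneOn_of_monotoneOn_sub monotoneOn_fDual monotoneOn_id_sub_fDual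

theorem fDual_neg_one : fDual (-1) = 0 := by
  simp [fDual]

theorem fDual_one : fDual 1 = 1 := by
  simp [fDual, pi_ne_zero]

theorem mapsTo_fDual : MapsTo fDual (Icc (-1) 1) (Icc 0 1) := fun x hx =>
  ⟨fDual_neg_one ▸ monotoneOn_fDual (left_mem_Icc.2 (by norm_num)) hx hx.1,
    fDual_one ▸ monotoneOn_fDual hx (right_mem_Icc.2 (by norm_num)) hx.2⟩

theorem stmt_4_general (σa : ℝ) (hσ1 : σa ^ 2 < 1)
    (t : ℝ) (ht : t ∈ Set.Icc (-1 : ℝ) 1) :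
    Set.MapsTo (fun x => σa ^ 2 * fDual x + (1 - σa ^ 2) * t)
      (Set.Icc (-1 : ℝ) 1) (Set.Icc (-1 : ℝ) 1) ∧
    LipschitzOnWith (Real.toNNReal (σa ^ 2))
      (fun x => σa ^ 2 * fDual x + (1 - σa ^ 2) * t) (Set.Icc (-1 : ℝ) 1) ∧
    (∃! x : ℝ, x ∈ Set.Icc (-1 : ℝ) 1 ∧ x = σa ^ 2 * fDual x + (1 - σa ^ 2) * t) := by
  have hσ : 0 ≤ σa ^ 2 := sq_nonneg σa
  have hmaps : MapsTo (fun x => σa ^ 2 * fDual x + (1 - σa ^ 2) * t) (Icc (-1) 1) (Icc (-1) 1) :=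
    fun x hx => by
      obtain ⟨h0, h1⟩ := mapsTo_fDual hx
      constructor <;> nlinarith [ht.1, ht.2]
  have hlip : LipschitzOnWith (σa ^ 2).toNNReal
      (fun x => σa ^ 2 * fDual x + (1 - σa ^ 2) * t) (Icc (-1) 1) := by
    simpa only [mul_one] using lipschitzOnWith_fDual.const_mul_add_const hσ ((1 - σa ^ 2) * t)
  refine ⟨hmaps, hlip, ?_⟩
  simpa only [IsFixedPt, eq_comm (b := _ + _)] using
    hlip.existsUnique_isFixedPt (Real.toNNReal_lt_one.2 hσ1) isClosed_Icc.isComplete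
      (nonempty_Icc.2 (by norm_num)) hmaps

theorem stmt_4 (σa : ℝ) (hσ0 : 0 < σa ^ 2) (hσ1 : σa ^ 2 < 1)
    (t : ℝ) (ht : t ∈ Set.Icc (-1 : ℝ) 1) :
    Set.MapsTo (fun x => σa ^ 2 * fDual x + (1 - σa ^ 2) * t)
      (Set.Icc (-1 : ℝ) 1) (Set.Icc (-1 : ℝ) 1) ∧
    LipschitzOnWith (Real.toNNReal (σa ^ 2))
      (fun x => σa ^ 2 * fDual x + (1 - σa ^ 2) * t) (Set.Icc (-1 : ℝ) 1) ∧
    (∃! x : ℝ, x ∈ Set.Icc (-1 : ℝ) 1 ∧ x = σa ^ 2 * fDual x + (1 - σa ^ 2) * t) :=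
  stmt_4_general σa hσ1 t ht
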